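/- Let G be a graph, uv ∈ E(G), and let S be a general position set of the double graph D(G). If |S ∩ {u, v, u', v'}| ≥ 2, then |S ∩ {u, v, u', v'}| = 2. -/

import Mathlib

open SimpleGraph

variable {V : Type*}

/-- A walk is a shortest path if it is a path and its length equals the distance
between its endpoints. -/
def SimpleGraph.IsShortestPath (G : SimpleGraph V) {u v : V} (p : G.Walk u v) : Prop :=
  p.IsPath ∧ p.length = G.dist u v

/-- `S` is a general position set: no three vertices of `S` lie on a common shortest path. -/
def SimpleGraph.IsGPSet (G : SimpleGraph V) (S : Set V) : Prop :=
  ∀ ⦃u v : V⦄ (p : G.Walk u v), G.IsShortestPath p →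
    ∀ x ∈ S, ∀ y ∈ S, ∀ z ∈ S, x ≠ y → x ≠ z → y ≠ z →
      ¬ (x ∈ p.support ∧ y ∈ p.support ∧ z ∈ p.support)

/-- `u` and `v` are `S`-visible: some shortest `u,v`-path has no internal vertex in `S`. -/
def SimpleGraph.SVisible (G : SimpleGraph V) (S : Set V) (u v : V) : Prop :=
  ∃ p : G.Walk u v, G.IsShortestPath p ∧ ∀ w ∈ p.support, w ≠ u → w ≠ v → w ∉ S

/-- `S` is a mutual-visibility set. -/
def SimpleGraph.IsMVSet (G : SimpleGraph V) (S : Set V) : Prop :=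
  ∀ u ∈ S, ∀ v ∈ S, u ≠ v → G.SVisible S u v

/-- `S` is a total mutual-visibility set. -/
def SimpleGraph.IsTotalMVSet (G : SimpleGraph V) (S : Set V) : Prop :=
  ∀ u v : V, u ≠ v → G.SVisible S u v

/-- `S` is an outer mutual-visibility set. -/
def SimpleGraph.IsOuterMVSet (G : SimpleGraph V) (S : Set V) : Prop :=
  G.IsMVSet S ∧ ∀ u ∈ S, ∀ v ∉ S, u ≠ v → G.SVisible S u v

/-- The mutual-visibility number `μ(G)`. -/
noncomputable def SimpleGraph.mutualVisibilityNumber (G : SimpleGraph V) [Fintype V] : ℕ :=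
  sSup {k | ∃ S : Finset V, G.IsMVSet ↑S ∧ S.card = k}

/-- The total mutual-visibility number `μ_t(G)`. -/
noncomputable def SimpleGraph.totalMutualVisibilityNumber (G : SimpleGraph V) [Fintype V] : ℕ :=
  sSup {k | ∃ S : Finset V, G.IsTotalMVSet ↑S ∧ S.card = k}

/-- The outer mutual-visibility number `μ_o(G)`. -/
noncomputable def SimpleGraph.outerMutualVisibilityNumber (G : SimpleGraph V) [Fintype V] : ℕ :=
  sSup {k | ∃ S : Finset V, G.IsOuterMVSet ↑S ∧ S.card = k}

/-- The general position number `gp(G)`. -/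
noncomputable def SimpleGraph.gpNumber (G : SimpleGraph V) [Fintype V] : ℕ :=
  sSup {k | ∃ S : Finset V, G.IsGPSet ↑S ∧ S.card = k}

/-- The double graph `D(G)`: two copies of each vertex, `(u, b)` adjacent to `(v, c)`
iff `u` adjacent to `v` in `G`. -/
def SimpleGraph.doubleGraph (G : SimpleGraph V) : SimpleGraph (V × Bool) where
  Adj x y := G.Adj x.1 y.1
  symm := ⟨fun _ _ h => G.adj_symm h⟩
  loopless := ⟨fun x h => G.irrefl (v := x.1) h⟩

/-- The Mycielskian `M(G)`: `some (u, false)` are the original vertices, `some (u, true)`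
their copies, and `none` is the apex vertex `v*`. -/
def SimpleGraph.mycielskian (G : SimpleGraph V) : SimpleGraph (Option (V × Bool)) where
  Adj x y := match x, y with
    | some (u, false), some (v, false) => G.Adj u v
    | some (u, false), some (v, true) => G.Adj u v
    | some (u, true), some (v, false) => G.Adj u v
    | some (_, true), none => True
    | none, some (_, true) => True
    | _, _ => False
  symm := ⟨by
    rintro (_ | ⟨u, (_|_)⟩) (_ | ⟨v, (_|_)⟩) h <;>
      first
        | exact h
        | exact G.adj_symm h⟩
  loopless := ⟨by
    rintro (_ | ⟨u, (_|_)⟩) h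
    · exact h
    · exact G.irrefl h
    · exact h⟩

/-!
A vertex `u` and its copy `u'` are at distance two in `D(G)`, and any common neighbour lies on a
shortest `u,u'`-path. So if both copies of `u` lie in a general position set `S`, no copy of a
neighbour `v` does. Hence `S` meets `{u, u', v, v'}` either in one twin pair, or in at most one
vertex of each pair; in both cases in at most two vertices.
-/

namespace SimpleGraph

theorem isShortestPath_cons_cons {H : SimpleGraph V} {a b c : V} (hab : H.Adj a b)
    (hbc : H.Adj b c) (hac : ¬ H.Adj a c) (hne : a ≠ c) :
    H.IsShortestPath (.cons hab (.cons hbc .nil)) := by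
  let p : H.Walk a c := .cons hab (.cons hbc .nil)
  have hle : H.dist a c ≤ 2 := H.dist_le p
  have h0 : H.dist a c ≠ 0 := fun h =>
    (dist_eq_zero_iff_eq_or_not_reachable.1 h).elim hne (· ⟨p⟩)
  have h1 : H.dist a c ≠ 1 := fun h => hac (dist_eq_one_iff_adj.1 h)
  refine ⟨?_, ?_⟩
  · rw [Walk.isPath_def]
    simp [hab.ne, hbc.ne, hne]
  · simp only [Walk.length_cons, Walk.length_nil]
    omega

theorem IsGPSet.notMem_of_adj_of_adj {H : SimpleGraph V} {S : Set V} (hS : H.IsGPSet S)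
    {a b c : V} (hab : H.Adj a b) (hbc : H.Adj b c) (hac : ¬ H.Adj a c) (hne : a ≠ c)
    (ha : a ∈ S) (hc : c ∈ S) : b ∉ S := fun hb =>
  hS _ (isShortestPath_cons_cons hab hbc hac hne) a ha b hb c hc hab.ne hne hbc.ne
    ⟨by simp, by simp, by simp⟩

variable [DecidableEq V]

def twinPair (u : V) : Finset (V × Bool) := {(u, false), (u, true)}

@[simp]
theorem mem_twinPair {x : V × Bool} {u : V} : x ∈ twinPair u ↔ x.1 = u := by
  obtain ⟨a, _ | _⟩ := x <;> simp [twinPair]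

theorem card_inter_twinPair_le (S : Finset (V × Bool)) (u : V) : (S ∩ twinPair u).card ≤ 2 :=
  (Finset.card_le_card Finset.inter_subset_right).trans Finset.card_le_two

theorem twinPair_subset_of_card_inter_eq_two {S : Finset (V × Bool)} {u : V}
    (h : (S ∩ twinPair u).card = 2) : twinPair u ⊆ S := by
  have hcard : (twinPair u).card ≤ (S ∩ twinPair u).card :=
    h ▸ Finset.card_le_two
  exact Finset.inter_eq_right.1
    (Finset.eq_of_subset_of_card_le Finset.inter_subset_right hcard)

theorem IsGPSet.disjoint_twinPair_of_adj {G : SimpleGraph V} {S : Finset (V × Bool)}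
    (hS : G.doubleGraph.IsGPSet ↑S) {u v : V} (huv : G.Adj u v) (hu : twinPair u ⊆ S) :
    Disjoint S (twinPair v) := by
  rw [Finset.disjoint_right]
  intro x hx
  rw [mem_twinPair] at hx
  exact hS.notMem_of_adj_of_adj (a := (u, false)) (c := (u, true))
    (show G.Adj u x.1 from hx ▸ huv) (show G.Adj x.1 u from hx ▸ huv.symm) G.irrefl
    (by simp) (hu (by simp)) (hu (by simp))

theorem IsGPSet.card_inter_twinPair_eq_zero_of_adj {G : SimpleGraph V} {S : Finset (V × Bool)}
    (hS : G.doubleGraph.IsGPSet ↑S) {u v : V} (huv : G.Adj u v)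
    (hu : (S ∩ twinPair u).card = 2) : (S ∩ twinPair v).card = 0 := by
  rw [Finset.card_eq_zero, ← Finset.disjoint_iff_inter_eq_empty]
  exact hS.disjoint_twinPair_of_adj huv (twinPair_subset_of_card_inter_eq_two hu)

theorem card_inter_eq_card_inter_twinPair_add {S : Finset (V × Bool)} {u v : V} (huv : u ≠ v) :
    (S ∩ {(u, false), (v, false), (u, true), (v, true)}).card =
      (S ∩ twinPair u).card + (S ∩ twinPair v).card := by
  have hsplit : ({(u, false), (v, false), (u, true), (v, true)} : Finset (V × Bool)) =
      twinPair u ∪ twinPair v := by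
    ext ⟨a, _ | _⟩ <;> simp
  have hdisj : Disjoint (S ∩ twinPair u) (S ∩ twinPair v) := by
    simp only [Finset.disjoint_left, Finset.mem_inter, mem_twinPair]
    rintro x ⟨-, rfl⟩ ⟨-, h⟩
    exact huv h
  rw [hsplit, Finset.inter_union_distrib_left, Finset.card_union_of_disjoint hdisj]

end SimpleGraph

theorem gp_double_twins [DecidableEq V] (G : SimpleGraph V) (u v : V) (huv : G.Adj u v)
    (S : Finset (V × Bool)) (hS : G.doubleGraph.IsGPSet ↑S)
    (h2 : 2 ≤ (S ∩ {(u, false), (v, false), (u, true), (v, true)}).card) :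
    (S ∩ {(u, false), (v, false), (u, true), (v, true)}).card = 2 := by
  rw [card_inter_eq_card_inter_twinPair_add huv.ne] at h2 ⊢
  have hu := card_inter_twinPair_le S u
  have hv := card_inter_twinPair_le S v
  have huv₀ := hS.card_inter_twinPair_eq_zero_of_adj huv
  have hvu₀ := hS.card_inter_twinPair_eq_zero_of_adj huv.symm
  omega
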